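/- arXiv:2502.02328 — 3 statements merged into one kernel-verified Lean document; each statement's English description precedes it below -/
import Mathlib

section
/- At the Riley effort e^R defined by c(θ_L, e^R) = θ_H − max{θ_L, 0}, the high type strictly prefers exerting e^R for wage θ_H over exerting 0 for wage max{θ_L, 0}: θ_H − c(θ_H, e^R) > max{θ_L, 0}, while the low type is exactly indifferent: θ_H − c(θ_L, e^R) = max{θ_L, 0}. -/
/-- at the Riley effort, the high type strictly prefers
(θH, e^R) to (max{θL,0}, 0) while the low type is indifferent. -/
theorem stmt_2
    (c : ℝ → ℝ → ℝ) (θL θH eR : ℝ)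
    (hθ : θL < θH) (hθH : 0 < θH)
    (hzero : ∀ θ : ℝ, c θ 0 = 0)
    (hSDD : ∀ e e' : ℝ, e < e' →
      0 ≤ c θL e - c θH e ∧ c θL e - c θH e < c θL e' - c θH e')
    (heR : 0 < eR)
    (hRiley : c θL eR = θH - max θL 0) :
    θH - c θH eR > max θL 0 ∧ θH - c θL eR = max θL 0 := by
  have h := (hSDD 0 eR heR).2
  have h0L := hzero θL
  have h0H := hzero θH
  constructor
  · linarith
  · linarith
end

section
/- Screening fee bound: suppose θ_L < 0 < θ_H, λ ∈ (0,1), n ≥ 2, and q_l ∈ [0,1] is the fraction of enrolling low types. If the symmetric profit π* = (λ + (1−λ)q_l) f* / n must be at least λ f* (no profitable undercutting), then q_l ≥ (n−1)λ/(1−λ); and since f* ≤ max{(λθ_H + (1−λ)q_l θ_L)/(λ + (1−λ)q_l), 0}, it follows that f* ≤ max{(θ_H + (n−1)θ_L)/n, 0}. In particular, if −(n−1)θ_L ≥ θ_H then f* = 0. -/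
/-- screening fee bound under competition. -/
theorem stmt_13
    (n : ℕ) (lam θL θH ql fstar : ℝ)
    (hn : 2 ≤ n) (hlam : 0 < lam ∧ lam < 1)
    (hθL : θL < 0) (hθH : 0 < θH)
    (hql : 0 ≤ ql ∧ ql ≤ 1)
    (hf0 : 0 ≤ fstar)
    (hnoundercut : (lam + (1 - lam) * ql) * fstar / n ≥ lam * fstar)
    (hfeasible : fstar ≤
      max ((lam * θH + (1 - lam) * ql * θL) / (lam + (1 - lam) * ql)) 0) :
    (0 < fstar → ql ≥ ((n : ℝ) - 1) * lam / (1 - lam)) ∧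
    fstar ≤ max ((θH + ((n : ℝ) - 1) * θL) / n) 0 ∧
    (-(((n : ℝ) - 1) * θL) ≥ θH → fstar = 0) := by
  obtain ⟨hl0, hl1⟩ := hlam
  obtain ⟨hq0, hq1⟩ := hql
  have h1l : 0 < 1 - lam := by linarith
  have hn2 : (2:ℝ) ≤ n := by exact_mod_cast hn
  have hnpos : (0:ℝ) < n := by linarith
  have hD : 0 < lam + (1 - lam) * ql := by nlinarith
  have key : 0 < fstar → ql ≥ ((n : ℝ) - 1) * lam / (1 - lam) := by
    intro hf
    have h2 : lam * fstar * n ≤ (lam + (1 - lam) * ql) * fstar := by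
      rw [ge_iff_le, le_div_iff₀ hnpos] at hnoundercut
      linarith
    have h3 : lam * n ≤ lam + (1 - lam) * ql := by nlinarith
    rw [ge_iff_le, div_le_iff₀ h1l]
    nlinarith
  have key2 : fstar ≤ max ((θH + ((n : ℝ) - 1) * θL) / n) 0 := by
    rcases eq_or_lt_of_le hf0 with h | h
    · rw [← h]; exact le_max_right _ _
    · have hq := key h
      rw [ge_iff_le, div_le_iff₀ h1l] at hq
      have hDn : n * lam ≤ lam + (1 - lam) * ql := by nlinarith
      have hAB : (lam * θH + (1 - lam) * ql * θL) / (lam + (1 - lam) * ql)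
          ≤ (θH + ((n : ℝ) - 1) * θL) / n := by
        rw [div_le_div_iff₀ hD hnpos]
        nlinarith [mul_pos hl0 (sub_pos.mpr (hθL.trans hθH))]
      calc fstar ≤ max ((lam * θH + (1 - lam) * ql * θL) / (lam + (1 - lam) * ql)) 0 :=
              hfeasible
        _ ≤ max ((θH + ((n : ℝ) - 1) * θL) / n) 0 := max_le_max hAB le_rfl
  refine ⟨key, key2, fun hneg => ?_⟩
  have hB : (θH + ((n : ℝ) - 1) * θL) / n ≤ 0 := by
    apply div_nonpos_of_nonpos_of_nonneg _ hnpos.le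
    linarith
  have : fstar ≤ 0 := by
    have := key2
    rwa [max_eq_right hB] at this
  linarith
end

section
/- Screening welfare under credit constraint: with θ_L < 0 < θ_H, λ ∈ (0,1), K ∈ [𝔼θ, θ_H), monopoly welfare is λθ_H + α_K(1−λ)θ_L (pooling, zero effort, with α_K = λ(θ_H−K)/((1−λ)(K−θ_L)) of low types employed), while competitive Riley welfare is λ(θ_H − c(θ_H, e^R)). Monopoly welfare exceeds competitive welfare if and only if λ·c(θ_H, e^R) > −α_K(1−λ)θ_L, i.e., iff c(θ_H, e^R) > (θ_H − K)(−θ_L)/(K − θ_L). -/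
/-- under a credit constraint, monopoly welfare exceeds
competitive (Riley) welfare iff λ·c(θH,e^R) > −α_K(1−λ)θL, equivalently iff
c(θH,e^R) > (θH − K)(−θL)/(K − θL). -/
theorem stmt_19
    (c : ℝ → ℝ → ℝ) (lam θL θH K eR αK : ℝ)
    (hlam : 0 < lam ∧ lam < 1) (hθL : θL < 0) (hθH : 0 < θH)
    (hK : lam * θH + (1 - lam) * θL ≤ K ∧ K < θH)
    (hα : αK = lam * (θH - K) / ((1 - lam) * (K - θL)))
    (heR : 0 < eR) (hRiley : c θL eR = θH) :
    (lam * θH + αK * (1 - lam) * θL > lam * (θH - c θH eR) ↔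
      lam * c θH eR > -(αK * (1 - lam) * θL)) ∧
    (lam * c θH eR > -(αK * (1 - lam) * θL) ↔
      c θH eR > (θH - K) * (-θL) / (K - θL)) := by
  obtain ⟨hl0, hl1⟩ := hlam
  have h1l : (0:ℝ) < 1 - lam := by linarith
  have hKL : 0 < K - θL := by nlinarith
  constructor
  · constructor <;> intro h <;> nlinarith
  · have hA : -(αK * (1 - lam) * θL) = lam * ((θH - K) * (-θL) / (K - θL)) := by
      rw [hα]; field_simp
    rw [hA]; exact mul_lt_mul_iff_right₀ hl0
end
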